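/- Assume the rainbow-subgraph setup: c is an edge-coloring of the complete graph K_n containing no rainbow copy of (t+2)K_3 (t ≥ 0); G is a spanning subgraph of K_n that is rainbow under c and contains exactly one edge of every color used by c; M is a family of t+1 pairwise vertex-disjoint triangles in G; D is the induced subgraph of G on the vertices not covered by M; and X is a set of vertices of D that is independent in D such that any two distinct vertices of X have at least 4 common neighbors in D. Suppose (x,y,z) is a triangle of M and T ⊆ X with |T| ≥ 4 satisfies c(uv) = c(xy) for all distinct u, v ∈ T. Then for each vertex v ∈ {x, y, z}, the set N_G(v) ∩ V(D) is an independent set of G. -/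
import Mathlib

private lemma tri_edge_inj {α : Type*} {t : Fin 3 → α} (ht : Function.Injective t)
    (k k' : Fin 3) (h : s(t k, t (k+1)) = s(t k', t (k'+1))) : k = k' := by
  rw [Sym2.eq_iff] at h
  simp only [ht.eq_iff] at h
  fin_cases k <;> fin_cases k' <;> revert h <;> decide

private lemma tri_edge_ne {α : Type*} {t u : Fin 3 → α} (h : ∀ k k', t k ≠ u k')
    (k k' : Fin 3) : s(t k, t (k+1)) ≠ s(u k', u (k'+1)) := by
  intro he
  rw [Sym2.eq_iff] at he
  rcases he with ⟨h1, h2⟩ | ⟨h1, h2⟩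
  exacts [h _ _ h1, h _ _ h1]



/-- `G` contains `k` pairwise vertex-disjoint triangles whose `3k` edges receive pairwise
distinct colors under `c`: a rainbow copy of `k·K₃`. -/
def RainbowIndepTrianglesIn {V : Type*} (G : SimpleGraph V) (k : ℕ)
    (c : Sym2 V → ℕ) : Prop :=
  ∃ f : Fin k → Fin 3 → V,
    Function.Injective (fun p : Fin k × Fin 3 => f p.1 p.2) ∧
    (∀ i, G.Adj (f i 0) (f i 1) ∧ G.Adj (f i 1) (f i 2) ∧ G.Adj (f i 0) (f i 2)) ∧
    Function.Injective (fun p : Fin k × Fin 3 => c s(f p.1 p.2, f p.1 (p.2 + 1)))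

private lemma build_rainbow {n m : ℕ} (c : Sym2 (Fin n) → ℕ) (G : SimpleGraph (Fin n))
    (hGrainbow : ∀ e ∈ G.edgeSet, ∀ e' ∈ G.edgeSet, c e = c e' → e = e')
    (f : Fin (m + 1) → Fin 3 → Fin n)
    (hinj : Function.Injective fun p : Fin (m + 1) × Fin 3 => f p.1 p.2)
    (hadj : ∀ j (k k' : Fin 3), k ≠ k' → G.Adj (f j k) (f j k'))
    (i : Fin (m + 1)) (B C : Fin 3 → Fin n)
    (hBinj : Function.Injective B)
    (hCinj : Function.Injective C)
    (hBC : ∀ k k', B k ≠ C k')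
    (hfB : ∀ j, j ≠ i → ∀ k k', f j k ≠ B k')
    (hfC : ∀ j k k', f j k ≠ C k')
    (hBadj : ∀ k : Fin 3, G.Adj (B k) (B (k + 1)))
    (hCadj : ∀ k : Fin 3, k ≠ 0 → G.Adj (C k) (C (k + 1)))
    (e₀ : Sym2 (Fin n)) (he₀ : e₀ ∈ G.edgeSet)
    (hc0 : c s(C 0, C (0 + 1)) = c e₀)
    (he₀f : ∀ j, j ≠ i → ∀ k : Fin 3, s(f j k, f j (k + 1)) ≠ e₀)
    (he₀B : ∀ k : Fin 3, s(B k, B (k + 1)) ≠ e₀)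
    (he₀C : ∀ k : Fin 3, k ≠ 0 → s(C k, C (k + 1)) ≠ e₀) :
    RainbowIndepTrianglesIn (⊤ : SimpleGraph (Fin n)) (m + 1 + 1) c := by
  classical
  have hkk1 : ∀ k : Fin 3, k ≠ k + 1 := by decide
  set F : Fin (m + 1 + 1) → Fin 3 → Fin n :=
    Fin.snoc (Function.update f i B) C with hF
  have hFc : ∀ (j : Fin (m+1)) (k : Fin 3), j ≠ i → F j.castSucc k = f j k := by
    intro j k hj
    rw [hF, Fin.snoc_castSucc, Function.update_of_ne hj]
  have hFi : ∀ k, F i.castSucc k = B k := by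
    intro k; rw [hF, Fin.snoc_castSucc, Function.update_self]
  have hFl : ∀ k, F (Fin.last (m+1)) k = C k := by
    intro k; rw [hF, Fin.snoc_last]
  have hFinj : Function.Injective (fun p : Fin (m+1+1) × Fin 3 => F p.1 p.2) := by
    rintro ⟨j, k⟩ ⟨j', k'⟩ h
    simp only at h
    rcases Fin.eq_castSucc_or_eq_last j with ⟨j₀, rfl⟩ | rfl <;>
      rcases Fin.eq_castSucc_or_eq_last j' with ⟨j₀', rfl⟩ | rfl
    · by_cases hji : j₀ = i <;> by_cases hji' : j₀' = i
      · subst hji; subst hji'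
        rw [hFi, hFi] at h
        rw [hBinj h]
      · subst hji
        rw [hFi, hFc _ _ hji'] at h
        exact absurd h.symm (hfB _ hji' _ _)
      · subst hji'
        rw [hFc _ _ hji, hFi] at h
        exact absurd h (hfB _ hji _ _)
      · rw [hFc _ _ hji, hFc _ _ hji'] at h
        have h2 : ((j₀, k) : Fin (m+1) × Fin 3) = (j₀', k') := hinj h
        simp only [Prod.mk.injEq] at h2
        simp [h2.1, h2.2]
    · by_cases hji : j₀ = i
      · subst hji; rw [hFi, hFl] at h; exact absurd h (hBC _ _)
      · rw [hFc _ _ hji, hFl] at h; exact absurd h (hfC _ _ _)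
    · by_cases hji' : j₀' = i
      · subst hji'; rw [hFl, hFi] at h; exact absurd h.symm (hBC _ _)
      · rw [hFl, hFc _ _ hji'] at h; exact absurd h.symm (hfC _ _ _)
    · rw [hFl, hFl] at h
      rw [hCinj h]
  have hFne : ∀ (j) (k k' : Fin 3), k ≠ k' → F j k ≠ F j k' := by
    intro j k k' hkk h
    have h2 : ((j, k) : Fin (m+1+1) × Fin 3) = (j, k') := hFinj h
    exact hkk (congrArg Prod.snd h2)
  have hFdisj : ∀ (j j' : Fin (m+1+1)), j ≠ j' → ∀ k k', F j k ≠ F j' k' := by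
    intro j j' hjj k k' h
    have h2 : ((j, k) : Fin (m+1+1) × Fin 3) = (j', k') := hFinj h
    exact hjj (congrArg Prod.fst h2)
  have hFtinj : ∀ j, Function.Injective (F j) := by
    intro j k k' h
    by_contra hkk
    exact hFne j k k' hkk h
  have hmem : ∀ (j : Fin (m+1+1)) (k : Fin 3), ¬(j = Fin.last (m+1) ∧ k = 0) →
      s(F j k, F j (k+1)) ∈ G.edgeSet := by
    intro j k hjk
    rw [SimpleGraph.mem_edgeSet]
    rcases Fin.eq_castSucc_or_eq_last j with ⟨j₀, rfl⟩ | rfl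
    · by_cases hji : j₀ = i
      · subst hji; rw [hFi, hFi]; exact hBadj k
      · rw [hFc _ _ hji, hFc _ _ hji]; exact hadj j₀ k (k+1) (hkk1 k)
    · have hk : k ≠ 0 := fun h => hjk ⟨rfl, h⟩
      rw [hFl, hFl]; exact hCadj k hk
  have hnee : ∀ (j : Fin (m+1+1)) (k : Fin 3), ¬(j = Fin.last (m+1) ∧ k = 0) →
      s(F j k, F j (k+1)) ≠ e₀ := by
    intro j k hjk
    rcases Fin.eq_castSucc_or_eq_last j with ⟨j₀, rfl⟩ | rfl
    · by_cases hji : j₀ = i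
      · subst hji; rw [hFi, hFi]; exact he₀B k
      · rw [hFc _ _ hji, hFc _ _ hji]; exact he₀f j₀ hji k
    · have hk : k ≠ 0 := fun h => hjk ⟨rfl, h⟩
      rw [hFl, hFl]; exact he₀C k hk
  have hedgeinj : ∀ (j j' : Fin (m+1+1)) (k k' : Fin 3),
      s(F j k, F j (k+1)) = s(F j' k', F j' (k'+1)) → j = j' ∧ k = k' := by
    intro j j' k k' h
    by_cases hjj : j = j'
    · subst hjj; exact ⟨rfl, tri_edge_inj (hFtinj j) k k' h⟩
    · exact absurd h (tri_edge_ne (hFdisj j j' hjj) k k')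
  refine ⟨F, hFinj, fun j => ⟨?_, ?_, ?_⟩, ?_⟩
  · simp only [SimpleGraph.top_adj]; exact hFne j 0 1 (by decide)
  · simp only [SimpleGraph.top_adj]; exact hFne j 1 2 (by decide)
  · simp only [SimpleGraph.top_adj]; exact hFne j 0 2 (by decide)
  · rintro ⟨j, k⟩ ⟨j', k'⟩ h
    simp only at h
    by_cases hp : j = Fin.last (m+1) ∧ k = 0 <;>
      by_cases hq : j' = Fin.last (m+1) ∧ k' = 0
    · obtain ⟨rfl, rfl⟩ := hp; obtain ⟨rfl, rfl⟩ := hq; rfl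
    · obtain ⟨rfl, rfl⟩ := hp
      rw [hFl, hFl, hc0] at h
      have h2 := hGrainbow e₀ he₀ _ (hmem j' k' hq) h
      exact absurd h2.symm (hnee j' k' hq)
    · obtain ⟨rfl, rfl⟩ := hq
      rw [hFl, hFl, hc0] at h
      have h2 := hGrainbow _ (hmem j k hp) e₀ he₀ h
      exact absurd h2 (hnee j k hp)
    · have h2 := hGrainbow _ (hmem j k hp) _ (hmem j' k' hq) h
      obtain ⟨h3, h4⟩ := hedgeinj _ _ _ _ h2
      simp [h3, h4]

/-- Claim 6: in the rainbow-subgraph setup, if `(x,y,z)` is a triangle of `M` and `T ⊆ X`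
with `|T| ≥ 4` has all its pairs colored `c(xy)`, then for each `v ∈ {x, y, z}` the set
`N_G(v) ∩ V(D)` is independent in `G`. -/
theorem neighborhood_in_D_independent (t n : ℕ) (c : Sym2 (Fin n) → ℕ)
    -- the coloring `c` of `K_n` admits no rainbow `(t+2)K₃`
    (hnoRainbow : ¬ RainbowIndepTrianglesIn (⊤ : SimpleGraph (Fin n)) (t + 2) c)
    -- `G` is a (spanning) rainbow subgraph of `K_n` with one edge of each used color
    (G : SimpleGraph (Fin n))
    (hGrainbow : ∀ e ∈ G.edgeSet, ∀ e' ∈ G.edgeSet, c e = c e' → e = e')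
    (hGcolors : ∀ e ∈ (⊤ : SimpleGraph (Fin n)).edgeSet, ∃ e' ∈ G.edgeSet, c e' = c e)
    -- `M` is a family of `t+1` pairwise vertex-disjoint triangles of `G`, given by `f`
    (f : Fin (t + 1) → Fin 3 → Fin n)
    (hinj : Function.Injective fun p : Fin (t + 1) × Fin 3 => f p.1 p.2)
    (htri : ∀ i, G.Adj (f i 0) (f i 1) ∧ G.Adj (f i 1) (f i 2) ∧ G.Adj (f i 0) (f i 2))
    -- `Dset` is the vertex set of `D`, the induced subgraph on vertices not covered by `M`
    (Dset : Set (Fin n)) (hDset : Dset = {x | ∀ i j, f i j ≠ x})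
    -- `X ⊆ V(D)` is independent in `D`, any two of its vertices having
    -- at least `4` common neighbors in `D`
    (X : Set (Fin n)) (hXD : X ⊆ Dset)
    (hXind : ∀ u ∈ X, ∀ v ∈ X, u ≠ v → ¬ G.Adj u v)
    (hXcn : ∀ u ∈ X, ∀ v ∈ X, u ≠ v →
      4 ≤ (G.neighborSet u ∩ G.neighborSet v ∩ Dset).ncard)
    -- `(x, y, z)` is a triangle of `M`
    (x y z : Fin n) (i : Fin (t + 1)) (σ : Equiv.Perm (Fin 3))
    (hx : x = f i (σ 0)) (hy : y = f i (σ 1)) (hz : z = f i (σ 2))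
    -- `T ⊆ X` with `|T| ≥ 4`, all pairs colored `c(xy)`
    (T : Set (Fin n)) (hTX : T ⊆ X) (hTcard : 4 ≤ T.ncard)
    (hTc : ∀ u ∈ T, ∀ v ∈ T, u ≠ v → c s(u, v) = c s(x, y)) :
    ∀ v ∈ ({x, y, z} : Set (Fin n)),
      ∀ a ∈ G.neighborSet v ∩ Dset, ∀ b ∈ G.neighborSet v ∩ Dset,
        a ≠ b → ¬ G.Adj a b := by
  subst hDset
  intro v hv a ha b hb hne hab
  obtain ⟨hva, haD⟩ := ha
  obtain ⟨hvb, hbD⟩ := hb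
  rw [SimpleGraph.mem_neighborSet] at hva hvb
  have haD' : ∀ i' j', f i' j' ≠ a := haD
  have hbD' : ∀ i' j', f i' j' ≠ b := hbD
  -- v is a vertex of triangle i
  obtain ⟨k₀, hvk⟩ : ∃ k₀ : Fin 3, v = f i (σ k₀) := by
    simp only [Set.mem_insert_iff, Set.mem_singleton_iff] at hv
    rcases hv with rfl | rfl | rfl
    exacts [⟨0, hx⟩, ⟨1, hy⟩, ⟨2, hz⟩]
  -- pick u₁ ≠ u₂ in T \ {a, b}
  have hT2 : 1 < (T \ {a, b}).ncard := by
    have h1 := Set.ncard_le_ncard_diff_add_ncard T {a, b}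
    have h2 := Set.ncard_insert_le a ({b} : Set (Fin n))
    have h3 := Set.ncard_singleton b
    omega
  obtain ⟨u₁, hu₁, u₂, hu₂, hu12⟩ := (Set.one_lt_ncard (Set.toFinite _)).mp hT2
  obtain ⟨hu₁T, hu₁ab⟩ := hu₁
  obtain ⟨hu₂T, hu₂ab⟩ := hu₂
  simp only [Set.mem_insert_iff, Set.mem_singleton_iff, not_or] at hu₁ab hu₂ab
  have hu1D : ∀ i' j', f i' j' ≠ u₁ := hXD (hTX hu₁T)
  have hu2D : ∀ i' j', f i' j' ≠ u₂ := hXD (hTX hu₂T)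
  -- pick a common neighbor w of u₁, u₂ in D, avoiding a, b
  have hcn := hXcn u₁ (hTX hu₁T) u₂ (hTX hu₂T) hu12
  have hW1 : ((G.neighborSet u₁ ∩ G.neighborSet u₂ ∩ {x | ∀ i j, f i j ≠ x}) \ {a, b}).Nonempty := by
    apply Set.nonempty_of_ncard_ne_zero
    have h1 := Set.ncard_le_ncard_diff_add_ncard
      (G.neighborSet u₁ ∩ G.neighborSet u₂ ∩ {x | ∀ i j, f i j ≠ x}) {a, b}
    have h2 := Set.ncard_insert_le a ({b} : Set (Fin n))
    have h3 := Set.ncard_singleton b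
    omega
  obtain ⟨w, hw⟩ := hW1
  obtain ⟨⟨⟨hwu1, hwu2⟩, hwD⟩, hwab⟩ := hw
  simp only [Set.mem_insert_iff, Set.mem_singleton_iff, not_or] at hwab
  rw [SimpleGraph.mem_neighborSet] at hwu1 hwu2
  have hwD' : ∀ i' j', f i' j' ≠ w := hwD
  -- basic distinctness facts
  have hvu1 : v ≠ u₁ := by rw [hvk]; exact hu1D i (σ k₀)
  have hvu2 : v ≠ u₂ := by rw [hvk]; exact hu2D i (σ k₀)
  have hvw : v ≠ w := by rw [hvk]; exact hwD' i (σ k₀)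
  have hadjG : ∀ j (k k' : Fin 3), k ≠ k' → G.Adj (f j k) (f j k') := by
    intro j k k' hkk
    fin_cases k <;> fin_cases k' <;>
      first
        | exact absurd rfl hkk
        | exact (htri j).1
        | exact (htri j).1.symm
        | exact (htri j).2.1
        | exact (htri j).2.1.symm
        | exact (htri j).2.2
        | exact (htri j).2.2.symm
  have hσ01 : σ 0 ≠ σ 1 := fun h => by simpa using σ.injective h
  have hxyG : s(x, y) ∈ G.edgeSet := by
    rw [SimpleGraph.mem_edgeSet, hx, hy]
    exact hadjG i _ _ hσ01
  have haX : a ≠ x := by rw [hx]; exact (haD' i (σ 0)).symm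
  have haY : a ≠ y := by rw [hy]; exact (haD' i (σ 1)).symm
  have hbX : b ≠ x := by rw [hx]; exact (hbD' i (σ 0)).symm
  have hbY : b ≠ y := by rw [hy]; exact (hbD' i (σ 1)).symm
  have hwX : w ≠ x := by rw [hx]; exact (hwD' i (σ 0)).symm
  have hwY : w ≠ y := by rw [hy]; exact (hwD' i (σ 1)).symm
  have hu2X : u₂ ≠ x := by rw [hx]; exact (hu2D i (σ 0)).symm
  have hu2Y : u₂ ≠ y := by rw [hy]; exact (hu2D i (σ 1)).symm
  apply hnoRainbow
  have := build_rainbow (m := t) c G hGrainbow f hinj hadjG i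
    ![v, a, b] ![u₁, u₂, w]
    -- hBinj
    (by
      intro k k' h
      fin_cases k <;> fin_cases k' <;>
        first
          | rfl
          | exact absurd h hva.ne | exact absurd h hvb.ne | exact absurd h hne
          | exact absurd h.symm hva.ne | exact absurd h.symm hvb.ne | exact absurd h.symm hne)
    -- hCinj
    (by
      intro k k' h
      fin_cases k <;> fin_cases k' <;>
        first
          | rfl
          | exact absurd h hu12 | exact absurd h hwu1.ne | exact absurd h hwu2.ne
          | exact absurd h.symm hu12 | exact absurd h.symm hwu1.ne | exact absurd h.symm hwu2.ne)
    -- hBC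
    (by
      intro k k'
      fin_cases k <;> fin_cases k'
      exacts [hvu1, hvu2, hvw,
          Ne.symm hu₁ab.1, Ne.symm hu₂ab.1, Ne.symm hwab.1,
          Ne.symm hu₁ab.2, Ne.symm hu₂ab.2, Ne.symm hwab.2])
    -- hfB
    (by
      intro j hj k k'
      fin_cases k'
      · show f j k ≠ v
        intro h; rw [hvk] at h
        have h2 : ((j, k) : Fin (t+1) × Fin 3) = (i, σ k₀) := hinj h
        exact hj (congrArg Prod.fst h2)
      · exact haD' j k
      · exact hbD' j k)
    -- hfC
    (by
      intro j k k'
      fin_cases k'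
      exacts [hu1D j k, hu2D j k, hwD' j k])
    -- hBadj
    (by
      intro k
      fin_cases k
      exacts [hva, hab, hvb.symm])
    -- hCadj
    (by
      intro k hk
      fin_cases k
      exacts [absurd rfl hk, hwu2, hwu1.symm])
    s(x, y) hxyG
    -- hc0
    (hTc u₁ hu₁T u₂ hu₂T hu12)
    -- he₀f
    (by
      intro j hj k he
      rw [hx, hy, Sym2.eq_iff] at he
      rcases he with ⟨h1, _⟩ | ⟨h1, _⟩ <;>
        · have h2 : ((j, k) : Fin (t+1) × Fin 3) = (i, _) := hinj h1
          exact hj (congrArg Prod.fst h2))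
    -- he₀B
    (by
      intro k he
      fin_cases k <;> rw [Sym2.eq_iff] at he <;>
        rcases he with ⟨h1, h2⟩ | ⟨h1, h2⟩ <;>
        first
          | exact absurd h2 haY | exact absurd h2 haX
          | exact absurd h1 haX | exact absurd h1 haY
          | exact absurd h1 hbX | exact absurd h1 hbY)
    -- he₀C
    (by
      intro k hk he
      fin_cases k
      · exact absurd rfl hk
      all_goals rw [Sym2.eq_iff] at he
      all_goals rcases he with ⟨h1, h2⟩ | ⟨h1, h2⟩ <;>
        first
          | exact absurd h1 hu2X | exact absurd h1 hu2Y
          | exact absurd h1 hwX | exact absurd h1 hwY)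
  exact this
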